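/- arXiv:2108.11438 — 2 statements merged into one kernel-verified Lean document; each statement's English description precedes it below -/
import Mathlib

section
/- The divided difference operators satisfy the braid relation ∂_i ∂_{i+1} ∂_i = ∂_{i+1} ∂_i ∂_{i+1}, and the commutation relation ∂_i ∂_j = ∂_j ∂_i whenever |i - j| ≥ 2. -/
/-!
In the fraction field `K` of `ℤ[x]`, `∂_i` becomes `g ↦ (g - s_i g) / (x_i - x_{i+1})`, where `s_i`
acts through the automorphism of `K` it induces. There both relations are identities between
rational expressions: for `|i - j| ≥ 2` because `s_i` and `s_j` commute and each fixes the other's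
denominator; for the braid relation because `s_i`, `s_{i+1}` satisfy it themselves and permute
`x_i, x_{i+1}, x_{i+2}`, so both sides expand to the same combination of the six images of `g`
over `(x_i - x_{i+1})(x_i - x_{i+2})(x_{i+1} - x_{i+2})`. They transfer back to `ℤ[x]` because
`x_i - x_{i+1}` divides `f - s_i f`, so `dd i f` is the genuine quotient and not the junk value `0`.
-/

open MvPolynomial Classical

/-- The action of the simple transposition `s_i` on polynomials, swapping `x_i` and `x_{i+1}`. -/
noncomputable def swapPoly (i : ℕ) (f : MvPolynomial ℕ ℤ) : MvPolynomial ℕ ℤ :=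
  rename (Equiv.swap i (i + 1)) f

/-- The divided difference operator `∂_i f = (f - s_i f)/(x_i - x_{i+1})`. -/
noncomputable def dd (i : ℕ) (f : MvPolynomial ℕ ℤ) : MvPolynomial ℕ ℤ :=
  if h : (X i - X (i + 1)) ∣ (f - swapPoly i f) then h.choose else 0

section DivDiff

variable {F : Type*} [Field F]

def divDiff (s : RingAut F) (a g : F) : F := (g - s g) / a

theorem divDiff_comm (s t : RingAut F) (a b : F) (hst : ∀ g, s (t g) = t (s g))
    (hsb : s b = b) (hta : t a = a) (g : F) :
    divDiff s a (divDiff t b g) = divDiff t b (divDiff s a g) := by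
  simp only [divDiff, map_div₀, map_sub, hst, hsb, hta]
  ring

theorem divDiff_braid (s t : RingAut F) (u v w : F)
    (hs : ∀ g, s (s g) = g) (ht : ∀ g, t (t g) = g) (hst : ∀ g, s (t (s g)) = t (s (t g)))
    (hsu : s u = v) (hsv : s v = u) (hsw : s w = w)
    (htu : t u = u) (htv : t v = w) (htw : t w = v)
    (huv : u ≠ v) (hvw : v ≠ w) (huw : u ≠ w) (g : F) :
    divDiff s (u - v) (divDiff t (v - w) (divDiff s (u - v) g)) =
      divDiff t (v - w) (divDiff s (u - v) (divDiff t (v - w) g)) := by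
  have huv' := sub_ne_zero.mpr huv
  have hvw' := sub_ne_zero.mpr hvw
  have huw' := sub_ne_zero.mpr huw
  simp only [divDiff, map_div₀, map_sub, hs, ht, hst, hsu, hsv, hsw, htu, htv, htw]
  field_simp
  ring

end DivDiff

namespace MvPolynomial

variable {σ R : Type*} [CommRing R]

theorem X_sub_X_dvd_sub_rename_swap [DecidableEq σ] (a b : σ) (f : MvPolynomial σ R) :
    X a - X b ∣ f - rename (Equiv.swap a b) f := by
  rw [← Ideal.mem_span_singleton, ← Ideal.Quotient.eq]
  set π := Ideal.Quotient.mkₐ R (Ideal.span {(X a - X b : MvPolynomial σ R)})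
  have hab : π (X a) = π (X b) := Ideal.Quotient.eq.mpr (Ideal.mem_span_singleton_self _)
  have hπ : π.comp (rename (Equiv.swap a b)) = π := algHom_ext fun j => by
    rcases eq_or_ne j a with rfl | hja
    · simp [hab]
    rcases eq_or_ne j b with rfl | hjb
    · simp [hab]
    · simp [Equiv.swap_apply_of_ne_of_ne hja hjb]
  exact (DFunLike.congr_fun hπ f).symm

variable (σ R) in
noncomputable def renameAut : Equiv.Perm σ →* RingAut (MvPolynomial σ R) where
  toFun e := (renameEquiv R e).toRingEquiv
  map_one' := by ext; simp
  map_mul' e e' := by ext; simp [rename_rename]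

end MvPolynomial

namespace DividedDifference

local notation "K" => FractionRing (MvPolynomial ℕ ℤ)
local notation "ι" => algebraMap (MvPolynomial ℕ ℤ) K

noncomputable def permAut : Equiv.Perm ℕ →* RingAut K :=
  (IsFractionRing.ringEquivOfRingEquivHom _ K).comp (renameAut ℕ ℤ)

theorem permAut_algebraMap (e : Equiv.Perm ℕ) (f : MvPolynomial ℕ ℤ) :
    permAut e (ι f) = ι (rename e f) :=
  IsFractionRing.ringEquivOfRingEquiv_algebraMap (renameAut ℕ ℤ e) f

theorem permAut_apply_permAut (e e' : Equiv.Perm ℕ) (g : K) :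
    permAut e (permAut e' g) = permAut (e * e') g := by
  rw [map_mul, RingAut.mul_apply]

noncomputable abbrev swapAut (i : ℕ) : RingAut K := permAut (Equiv.swap i (i + 1))

theorem swapAut_X (i j : ℕ) : swapAut i (ι (X j)) = ι (X (Equiv.swap i (i + 1) j)) := by
  rw [permAut_algebraMap, rename_X]

theorem swapAut_X_of_ne {i j : ℕ} (h : j ≠ i) (h' : j ≠ i + 1) :
    swapAut i (ι (X j)) = ι (X j) := by
  rw [swapAut_X, Equiv.swap_apply_of_ne_of_ne h h']

theorem swapAut_swapAut (i : ℕ) (g : K) : swapAut i (swapAut i g) = g := by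
  rw [permAut_apply_permAut, Equiv.swap_mul_self, map_one, RingAut.one_apply]

theorem swapAut_braid (i : ℕ) (g : K) :
    swapAut i (swapAut (i + 1) (swapAut i g)) =
      swapAut (i + 1) (swapAut i (swapAut (i + 1) g)) := by
  simp only [permAut_apply_permAut, ← mul_assoc]
  congr 2
  ext j
  simp only [Equiv.Perm.mul_apply, Equiv.swap_apply_def]
  split_ifs <;> omega

theorem swapAut_comm {i j : ℕ} (h : i + 2 ≤ j) (g : K) :
    swapAut i (swapAut j g) = swapAut j (swapAut i g) := by
  rw [permAut_apply_permAut, permAut_apply_permAut,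
    (Equiv.Perm.disjoint_swap_swap (by simp; omega)).commute.eq]

theorem algebraMap_X_injective : Function.Injective fun i => ι (X i) :=
  (IsFractionRing.injective _ K).comp X_injective

noncomputable def ddFrac (i : ℕ) : K → K :=
  divDiff (swapAut i) (ι (X i) - ι (X (i + 1)))

theorem algebraMap_dd (i : ℕ) (f : MvPolynomial ℕ ℤ) : ι (dd i f) = ddFrac i (ι f) := by
  have hdvd := X_sub_X_dvd_sub_rename_swap (R := ℤ) i (i + 1) f
  have hne : ι (X i) - ι (X (i + 1)) ≠ 0 :=
    sub_ne_zero.mpr (algebraMap_X_injective.ne (by omega))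
  rw [ddFrac, divDiff, eq_div_iff hne, permAut_algebraMap, ← map_sub, ← map_sub, ← map_mul, dd,
    swapPoly, dif_pos hdvd, mul_comm, ← hdvd.choose_spec]

theorem ddFrac_braid (i : ℕ) (g : K) :
    ddFrac i (ddFrac (i + 1) (ddFrac i g)) = ddFrac (i + 1) (ddFrac i (ddFrac (i + 1) g)) :=
  divDiff_braid _ _ _ _ _ (swapAut_swapAut i) (swapAut_swapAut (i + 1)) (swapAut_braid i)
    (by rw [swapAut_X, Equiv.swap_apply_left]) (by rw [swapAut_X, Equiv.swap_apply_right])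
    (swapAut_X_of_ne (by omega) (by omega)) (swapAut_X_of_ne (by omega) (by omega))
    (by rw [swapAut_X, Equiv.swap_apply_left]) (by rw [swapAut_X, Equiv.swap_apply_right])
    (algebraMap_X_injective.ne (by omega)) (algebraMap_X_injective.ne (by omega))
    (algebraMap_X_injective.ne (by omega)) g

theorem ddFrac_comm {i j : ℕ} (h : i + 2 ≤ j) (g : K) :
    ddFrac i (ddFrac j g) = ddFrac j (ddFrac i g) :=
  divDiff_comm _ _ _ _ (swapAut_comm h)
    (by rw [map_sub, swapAut_X_of_ne (by omega) (by omega), swapAut_X_of_ne (by omega) (by omega)])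
    (by rw [map_sub, swapAut_X_of_ne (by omega) (by omega), swapAut_X_of_ne (by omega) (by omega)])
    g

end DividedDifference

/-- Braid and commutation relations for divided difference operators. -/
theorem divided_difference_braid_and_commutation :
    (∀ (i : ℕ) (f : MvPolynomial ℕ ℤ),
      dd i (dd (i + 1) (dd i f)) = dd (i + 1) (dd i (dd (i + 1) f))) ∧
    (∀ (i j : ℕ), (i + 2 ≤ j ∨ j + 2 ≤ i) →
      ∀ f : MvPolynomial ℕ ℤ, dd i (dd j f) = dd j (dd i f)) := by
  refine ⟨fun i f => ?_, fun i j hij f => ?_⟩ <;>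
    apply IsFractionRing.injective (MvPolynomial ℕ ℤ) (FractionRing (MvPolynomial ℕ ℤ)) <;>
    simp only [DividedDifference.algebraMap_dd]
  · exact DividedDifference.ddFrac_braid i _
  · rcases hij with h | h
    · exact DividedDifference.ddFrac_comm h _
    · exact (DividedDifference.ddFrac_comm h _).symm
end

section
/- Let π ∈ S_n with ℓ(π) = ℓ and let (𝐚, 𝐫) be a compatible sequence of π. Define cross coordinates (r_k, j_k) by j_k = a_k − r_k + 1. Then these ℓ coordinates are pairwise distinct, and within each fixed row index r, the column indices j_k are strictly decreasing as k increases. -/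
/-- Coxeter length (number of inversions) of a finitely supported permutation of `ℕ`
(0-indexed model of `S_∞`). -/
noncomputable def lenInf (π : Equiv.Perm ℕ) : ℕ :=
  Set.ncard {p : ℕ × ℕ | p.1 < p.2 ∧ π p.2 < π p.1}

/-- The simple transposition `s_{i+1}` (0-indexed: swaps `i` and `i+1`). -/
def simpleSwap (i : ℕ) : Equiv.Perm ℕ := Equiv.swap i (i + 1)

/-- `(a, r)` is a (reduced) compatible sequence of `π` (everything 0-indexed):
`a` is a reduced word of `π`, `r` is weakly increasing, `r_j ≤ a_j`, and
`r_j < r_{j+1}` whenever `a_j < a_{j+1}`. -/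
def IsCompatible (π : Equiv.Perm ℕ) (ℓ : ℕ) (a r : Fin ℓ → ℕ) : Prop :=
  (List.ofFn fun k => simpleSwap (a k)).prod = π ∧ ℓ = lenInf π ∧
  Monotone r ∧ (∀ k, r k ≤ a k) ∧
  ∀ (k : Fin ℓ) (h : (k : ℕ) + 1 < ℓ), a k < a ⟨k + 1, h⟩ → r k < r ⟨k + 1, h⟩

/-!
A word whose product is `π` bounds the number of inversions of `π` by its length, since each
simple transposition creates at most one inversion. So a reduced word of `π` cannot contain a
factor `s_i s_i`: deleting it would give a shorter word for `π`. Hence two adjacent letters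
of a compatible sequence that share a row index are strictly decreasing (an ascent would force
the row index to increase), and since the row indices are monotone, each row is a block of
consecutive positions on which the letters, hence the columns `a_k - r_k + 1`, strictly decrease.
-/

def inversions (σ : Equiv.Perm ℕ) : Set (ℕ × ℕ) :=
  {p | p.1 < p.2 ∧ σ p.2 < σ p.1}

lemma simpleSwap_mul_self (i : ℕ) : simpleSwap i * simpleSwap i = 1 :=
  Equiv.swap_mul_self _ _

lemma inversions_simpleSwap_mul_subset (i : ℕ) (σ : Equiv.Perm ℕ) :
    inversions (simpleSwap i * σ) ⊆ insert (σ⁻¹ i, σ⁻¹ (i + 1)) (inversions σ) := by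
  rintro ⟨p, q⟩ ⟨hpq, hlt⟩
  dsimp only at hpq hlt
  simp only [simpleSwap, Equiv.Perm.mul_apply, Equiv.swap_apply_def] at hlt
  by_cases hpi : σ p = i ∧ σ q = i + 1
  · left
    rw [← hpi.2, ← hpi.1]
    simp
  · right
    refine ⟨hpq, show σ q < σ p from ?_⟩
    split_ifs at hlt <;> omega

lemma encard_inversions_simpleSwap_mul_le (i : ℕ) (σ : Equiv.Perm ℕ) :
    (inversions (simpleSwap i * σ)).encard ≤ (inversions σ).encard + 1 :=
  (Set.encard_le_encard (inversions_simpleSwap_mul_subset i σ)).trans (Set.encard_insert_le _ _)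

lemma encard_inversions_prod_le (L : List ℕ) :
    (inversions (L.map simpleSwap).prod).encard ≤ L.length := by
  induction L with
  | nil => simpa [inversions, Set.eq_empty_iff_forall_notMem] using fun _ _ => le_of_lt
  | cons i L ih =>
    rw [List.map_cons, List.prod_cons, List.length_cons, Nat.cast_succ]
    exact (encard_inversions_simpleSwap_mul_le i _).trans (by gcongr)

lemma lenInf_prod_le (L : List ℕ) : lenInf (L.map simpleSwap).prod ≤ L.length :=
  ENat.toNat_le_of_le_natCast (encard_inversions_prod_le L)

lemma prod_map_simpleSwap_append_cons_cons (l₁ l₂ : List ℕ) (i : ℕ) :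
    ((l₁ ++ i :: i :: l₂).map simpleSwap).prod = ((l₁ ++ l₂).map simpleSwap).prod := by
  simp only [List.map_append, List.map_cons, List.prod_append, List.prod_cons,
    ← mul_assoc (simpleSwap i), simpleSwap_mul_self, one_mul]

lemma lenInf_prod_lt_length_of_getElem_eq (L : List ℕ) (k : ℕ) (hk : k + 1 < L.length)
    (h : L[k] = L[k + 1]) : lenInf (L.map simpleSwap).prod < L.length := by
  have hL : L = L.take k ++ L[k] :: L[k + 1] :: L.drop (k + 1 + 1) := by
    rw [← List.drop_eq_getElem_cons, ← List.drop_eq_getElem_cons, List.take_append_drop]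
  rw [hL, h, prod_map_simpleSwap_append_cons_cons]
  have := lenInf_prod_le (L.take k ++ L.drop (k + 1 + 1))
  simp only [List.length_append, List.length_take, List.length_drop, List.length_cons] at this ⊢
  omega

lemma Fin.exists_orderSucc_eq_of_not_isMax {n : ℕ} {i : Fin n} (hi : ¬ IsMax i) :
    ∃ h : (i : ℕ) + 1 < n, Order.succ i = ⟨i + 1, h⟩ := by
  obtain ⟨j, hij⟩ := not_isMax_iff.mp hi
  have h : (i : ℕ) + 1 < n := by have := j.isLt; omega
  refine ⟨h, le_antisymm (Order.succ_le_of_lt (Fin.mk_lt_of_lt_val (by simp))) ?_⟩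
  exact Fin.mk_le_of_le_val (Order.lt_succ_of_not_isMax hi)

namespace IsCompatible

variable {π : Equiv.Perm ℕ} {ℓ : ℕ} {a r : Fin ℓ → ℕ}

lemma apply_ne_apply_succ (h : IsCompatible π ℓ a r) (k : Fin ℓ) (hk : (k : ℕ) + 1 < ℓ) :
    a k ≠ a ⟨k + 1, hk⟩ := by
  intro heq
  have hprod : ((List.ofFn a).map simpleSwap).prod = π := by
    rw [List.map_ofFn]; exact h.1
  have := lenInf_prod_lt_length_of_getElem_eq (List.ofFn a) k (by simpa using hk)
    (by simpa using heq)
  rw [hprod, List.length_ofFn, ← h.2.1] at this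
  exact this.false

lemma apply_succ_lt_of_eq (h : IsCompatible π ℓ a r) (k : Fin ℓ) (hk : (k : ℕ) + 1 < ℓ)
    (hr : r k = r ⟨k + 1, hk⟩) : a ⟨k + 1, hk⟩ < a k := by
  refine lt_of_le_of_ne (not_lt.mp fun hlt => ?_) (h.apply_ne_apply_succ k hk).symm
  exact (h.2.2.2.2 k hk hlt).ne hr

lemma strictAntiOn_preimage_singleton (h : IsCompatible π ℓ a r) (c : ℕ) :
    StrictAntiOn a (r ⁻¹' {c}) := by
  refine strictAntiOn_of_succ_lt (Set.ordConnected_singleton.preimage_mono h.2.2.1) ?_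
  intro k hk hkc hsucc
  obtain ⟨hk', hsucc_eq⟩ := Fin.exists_orderSucc_eq_of_not_isMax hk
  rw [hsucc_eq] at hsucc ⊢
  exact h.apply_succ_lt_of_eq k hk' (hkc.trans hsucc.symm)

end IsCompatible

/-- The cross coordinates `(r_k, a_k − r_k + 1)` of a compatible sequence are pairwise
distinct, and within a fixed row the column indices strictly decrease. -/
theorem compatible_sequence_cross_coordinates (π : Equiv.Perm ℕ) (ℓ : ℕ) (a r : Fin ℓ → ℕ)
    (h : IsCompatible π ℓ a r) :
    Function.Injective (fun k : Fin ℓ => (r k, a k - r k + 1)) ∧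
    ∀ k k' : Fin ℓ, k < k' → r k = r k' → a k' - r k' + 1 < a k - r k + 1 := by
  have hrow : ∀ k k' : Fin ℓ, k < k' → r k = r k' → a k' - r k' + 1 < a k - r k + 1 := by
    intro k k' hkk' hr
    have hlt := h.strictAntiOn_preimage_singleton (r k') hr rfl hkk'
    have hle := h.2.2.2.1 k'
    omega
  refine ⟨fun k k' hkk' => ?_, hrow⟩
  obtain ⟨hr, hcol⟩ := Prod.mk.inj hkk'
  by_contra hne
  rcases lt_or_gt_of_ne hne with hlt | hlt
  · exact (hrow k k' hlt hr).ne' hcol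
  · exact (hrow k' k hlt hr.symm).ne hcol
end
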